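/- For R' ≥ 0 and c ≥ 0, the symmetric tensor product estimate p_{R',c}(v ∨ w) ≤ p_{R',2^{R'}c}(v) · p_{R',2^{R'}c}(w) holds, where p_{R',c}(v) = Σ_k k!^{R'} c^k p^k(v_k) and p^k is the k-fold projective tensor power of a seminorm p; for R' ≤ 0 the seminorms p_{R',c} are submultiplicative. The scalar core: for nonnegative sequences (a_k),(b_k) with a product sequence satisfying the projective cross-norm inequality p^{j+ℓ}(x∨y) ≤ p^j(x)p^ℓ(y), one has Σ_k k!^{R'} c^k Σ_{j+ℓ=k} p^j(x_j)p^ℓ(y_ℓ) ≤ Σ_j j!^{R'}(2^{R'}c)^j p^j(x_j) · Σ_ℓ ℓ!^{R'}(2^{R'}c)^ℓ p^ℓ(y_ℓ), using (j+ℓ)! ≤ 2^{j+ℓ} j! ℓ!. -/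

import Mathlib

/-!
Multiplying out the two series on the right (Cauchy product) reduces the claim to the termwise
weight inequality `(j+ℓ)!^{R'} c^{j+ℓ} ≤ j!^{R'} (2^{R'}c)^j · ℓ!^{R'} (2^{R'}c)^ℓ`, which for
`R' ≥ 0` is `(j+ℓ)! = binom(j+ℓ, j) j! ℓ! ≤ 2^{j+ℓ} j! ℓ!` raised to the power `R'`. For `R' ≤ 0`
the map `x ↦ x^{R'}` is antitone and `j! ℓ! ≤ (j+ℓ)!` gives the weight inequality with no loss.
-/

open scoped ENNReal Nat
open Finset

theorem Nat.factorial_add_le_two_pow_mul (j l : ℕ) : (j + l)! ≤ 2 ^ (j + l) * (j ! * l !) := by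
  rw [← Nat.add_choose_mul_factorial_mul_factorial, mul_assoc]
  exact Nat.mul_le_mul_right _ (Nat.choose_le_two_pow _ _)

theorem ENNReal.rpow_le_rpow_of_nonpos {x y : ℝ≥0∞} {z : ℝ} (hxy : x ≤ y) (hz : z ≤ 0) :
    y ^ z ≤ x ^ z := by
  simpa only [ENNReal.rpow_neg, neg_neg, inv_inv] using
    ENNReal.inv_le_inv.mpr (ENNReal.rpow_le_rpow hxy (neg_nonneg.mpr hz))

theorem ENNReal.tsum_mul_tsum_eq_tsum_sum_range (f g : ℕ → ℝ≥0∞) :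
    (∑' n, f n) * (∑' n, g n) = ∑' n, ∑ k ∈ range (n + 1), f k * g (n - k) := by
  have hprod : (∑' n, f n) * (∑' n, g n) = ∑' p : ℕ × ℕ, f p.1 * g p.2 := by
    simp_rw [ENNReal.tsum_prod', ENNReal.tsum_mul_left, ENNReal.tsum_mul_right]
  simp_rw [hprod, ← Nat.sum_antidiagonal_eq_sum_range_succ fun k l => f k * g l,
    ← HasAntidiagonal.sigmaAntidiagonalEquivProd.tsum_eq (fun p : ℕ × ℕ => f p.1 * g p.2),
    ENNReal.tsum_sigma', tsum_fintype]
  exact tsum_congr fun n => sum_coe_sort (antidiagonal n) fun p => f p.1 * g p.2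

theorem ENNReal.tsum_mul_sum_range_le_tsum_mul_tsum {w a b u v : ℕ → ℝ≥0∞}
    (hw : ∀ j l, w (j + l) ≤ a j * b l) :
    ∑' k, w k * ∑ j ∈ range (k + 1), u j * v (k - j) ≤
      (∑' j, a j * u j) * ∑' l, b l * v l := by
  rw [ENNReal.tsum_mul_tsum_eq_tsum_sum_range]
  refine ENNReal.tsum_le_tsum fun k => ?_
  rw [mul_sum]
  refine sum_le_sum fun j hj => ?_
  obtain ⟨l, rfl⟩ := Nat.exists_eq_add_of_le (Nat.lt_succ_iff.mp (mem_range.mp hj))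
  rw [Nat.add_sub_cancel_left]
  calc w (j + l) * (u j * v l) ≤ a j * b l * (u j * v l) := by gcongr; exact hw j l
    _ = a j * u j * (b l * v l) := by ring

section FactorialWeight

variable {R' : ℝ} (c : ℝ≥0∞) (j l : ℕ)

theorem factorial_add_rpow_le_of_nonneg (hR : 0 ≤ R') :
    ((j + l)! : ℝ≥0∞) ^ R' ≤ (2 ^ R') ^ (j + l) * ((j ! : ℝ≥0∞) ^ R' * (l ! : ℝ≥0∞) ^ R') :=
  calc ((j + l)! : ℝ≥0∞) ^ R'
      ≤ ((2 ^ (j + l) * (j ! * l !) : ℕ) : ℝ≥0∞) ^ R' := by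
        gcongr; exact Nat.factorial_add_le_two_pow_mul j l
    _ = (2 ^ R') ^ (j + l) * ((j ! : ℝ≥0∞) ^ R' * (l ! : ℝ≥0∞) ^ R') := by
        push_cast
        rw [ENNReal.mul_rpow_of_nonneg _ _ hR, ENNReal.mul_rpow_of_nonneg _ _ hR,
          ← ENNReal.rpow_natCast_mul, ← ENNReal.rpow_mul_natCast, mul_comm (_ : ℝ) R']

theorem factorial_add_rpow_le_of_nonpos (hR : R' ≤ 0) :
    ((j + l)! : ℝ≥0∞) ^ R' ≤ (j ! : ℝ≥0∞) ^ R' * (l ! : ℝ≥0∞) ^ R' := by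
  have hle : (j ! : ℝ≥0∞) * l ! ≤ ((j + l)! : ℝ≥0∞) := by
    exact_mod_cast
      Nat.le_of_dvd (Nat.factorial_pos _) (Nat.factorial_mul_factorial_dvd_factorial_add j l)
  rw [← ENNReal.mul_rpow_of_ne_top (ENNReal.natCast_ne_top _) (ENNReal.natCast_ne_top _)]
  exact ENNReal.rpow_le_rpow_of_nonpos hle hR

theorem factorial_weight_add_le_of_nonneg (hR : 0 ≤ R') :
    ((j + l)! : ℝ≥0∞) ^ R' * c ^ (j + l) ≤
      (j ! : ℝ≥0∞) ^ R' * (2 ^ R' * c) ^ j * ((l ! : ℝ≥0∞) ^ R' * (2 ^ R' * c) ^ l) :=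
  calc ((j + l)! : ℝ≥0∞) ^ R' * c ^ (j + l)
      ≤ (2 ^ R') ^ (j + l) * ((j ! : ℝ≥0∞) ^ R' * (l ! : ℝ≥0∞) ^ R') * c ^ (j + l) := by
        gcongr; exact factorial_add_rpow_le_of_nonneg j l hR
    _ = _ := by rw [mul_pow, mul_pow, pow_add, pow_add]; ring

theorem factorial_weight_add_le_of_nonpos (hR : R' ≤ 0) :
    ((j + l)! : ℝ≥0∞) ^ R' * c ^ (j + l) ≤
      (j ! : ℝ≥0∞) ^ R' * c ^ j * ((l ! : ℝ≥0∞) ^ R' * c ^ l) :=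
  calc ((j + l)! : ℝ≥0∞) ^ R' * c ^ (j + l)
      ≤ (j ! : ℝ≥0∞) ^ R' * (l ! : ℝ≥0∞) ^ R' * c ^ (j + l) := by
        gcongr; exact factorial_add_rpow_le_of_nonpos j l hR
    _ = _ := by rw [pow_add]; ring

end FactorialWeight

/-- Continuity of the symmetric tensor product in the `R'`-topology, scalar core:
with `u_j = p^j(x_j)`, `v_ℓ = p^ℓ(y_ℓ)` (so that the projective cross-norm inequality
`p^{j+ℓ}(x∨y) ≤ p^j(x)p^ℓ(y)` has been applied), for `R' ≥ 0`
`Σ_k k!^{R'} c^k Σ_{j+ℓ=k} u_j v_ℓ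
  ≤ (Σ_j j!^{R'}(2^{R'}c)^j u_j)·(Σ_ℓ ℓ!^{R'}(2^{R'}c)^ℓ v_ℓ)`,
i.e. `p_{R',c}(v ∨ w) ≤ p_{R',2^{R'}c}(v)·p_{R',2^{R'}c}(w)`, using
`(j+ℓ)! ≤ 2^{j+ℓ} j! ℓ!`; while for `R' ≤ 0` the seminorms `p_{R',c}` are
submultiplicative. -/
theorem symmetric_product_Rprime_estimate (R' : ℝ) (c : ℝ≥0∞) (u v : ℕ → ℝ≥0∞) :
    (0 ≤ R' →
      ∑' k : ℕ, (k.factorial : ℝ≥0∞) ^ R' * c ^ k *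
          ∑ j ∈ Finset.range (k + 1), u j * v (k - j) ≤
        (∑' j : ℕ, (j.factorial : ℝ≥0∞) ^ R' * ((2 : ℝ≥0∞) ^ R' * c) ^ j * u j) *
          (∑' l : ℕ, (l.factorial : ℝ≥0∞) ^ R' * ((2 : ℝ≥0∞) ^ R' * c) ^ l * v l)) ∧
    (R' ≤ 0 →
      ∑' k : ℕ, (k.factorial : ℝ≥0∞) ^ R' * c ^ k *
          ∑ j ∈ Finset.range (k + 1), u j * v (k - j) ≤
        (∑' j : ℕ, (j.factorial : ℝ≥0∞) ^ R' * c ^ j * u j) *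
          (∑' l : ℕ, (l.factorial : ℝ≥0∞) ^ R' * c ^ l * v l)) :=
  ⟨fun hR => ENNReal.tsum_mul_sum_range_le_tsum_mul_tsum (w := fun k => (k ! : ℝ≥0∞) ^ R' * c ^ k)
      fun j l => factorial_weight_add_le_of_nonneg c j l hR,
    fun hR => ENNReal.tsum_mul_sum_range_le_tsum_mul_tsum (w := fun k => (k ! : ℝ≥0∞) ^ R' * c ^ k)
      fun j l => factorial_weight_add_le_of_nonpos c j l hR⟩
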